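/- arXiv:math/0411396 — 2 statements merged into one kernel-verified Lean document; each statement's English description precedes it below -/
import Mathlib

section
/- Let α ∈ ℝ and let f_α(x₁,x₂) = exp( iπα ( ∫₀^{x₁} (λ₁(s,x₂) + λ₁(s,0)) ds − ∫₀^{x₂} (λ₂(x₁,t) + λ₂(0,t)) dt ) ). Then f_α is ℤ²-periodic, i.e. f_α(x₁+n, x₂+m) = f_α(x₁,x₂) for all (x₁,x₂) ∈ ℝ² and all n, m ∈ ℤ, if and only if α·l₁ ∈ ℤ and α·l₂ ∈ ℤ. -/
open MeasureTheory intervalIntegral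

lemma swap_core (g : ℝ × ℝ → ℝ) (hg : Continuous g) {a b c d : ℝ} (hab : a ≤ b) (hcd : c ≤ d) :
    ∫ s in a..b, (∫ t in c..d, g (s, t)) = ∫ t in c..d, ∫ s in a..b, g (s, t) := by
  have hint : Integrable g ((volume.restrict (Set.Ioc a b)).prod (volume.restrict (Set.Ioc c d))) := by
    rw [Measure.prod_restrict]
    have : IntegrableOn g (Set.Icc a b ×ˢ Set.Icc c d) (volume.prod volume) := by
      rw [← Measure.volume_eq_prod]
      exact hg.continuousOn.integrableOn_compact (isCompact_Icc.prod isCompact_Icc)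
    rw [← Measure.volume_eq_prod]
    exact this.mono_set (Set.prod_mono Set.Ioc_subset_Icc_self Set.Ioc_subset_Icc_self)
  calc ∫ s in a..b, (∫ t in c..d, g (s, t))
      = ∫ s in Set.Ioc a b, (∫ t in Set.Ioc c d, g (s, t)) := by
        rw [intervalIntegral.integral_of_le hab]
        exact setIntegral_congr_fun measurableSet_Ioc fun s _ => intervalIntegral.integral_of_le hcd
    _ = ∫ t in Set.Ioc c d, ∫ s in Set.Ioc a b, g (s, t) := by
        exact MeasureTheory.integral_integral_swap hint
    _ = ∫ t in c..d, ∫ s in a..b, g (s, t) := by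
        rw [intervalIntegral.integral_of_le hcd]
        exact setIntegral_congr_fun measurableSet_Ioc fun t _ => (intervalIntegral.integral_of_le hab).symm

lemma swap_full (g : ℝ × ℝ → ℝ) (hg : Continuous g) (a b c d : ℝ) :
    ∫ s in a..b, (∫ t in c..d, g (s, t)) = ∫ t in c..d, ∫ s in a..b, g (s, t) := by
  rcases le_total a b with hab | hab <;> rcases le_total c d with hcd | hcd
  · exact swap_core g hg hab hcd
  · simp only [intervalIntegral.integral_symm d c, intervalIntegral.integral_neg]
    rw [swap_core g hg hab hcd]
  · simp only [intervalIntegral.integral_symm b a, intervalIntegral.integral_neg]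
    rw [swap_core g hg hab hcd]
  · simp only [intervalIntegral.integral_symm d c, intervalIntegral.integral_symm b a,
      intervalIntegral.integral_neg, neg_neg, neg_inj]
    rw [swap_core g hg hab hcd]
open MeasureTheory intervalIntegral

lemma slice_deriv_v (lam : ℝ × ℝ → ℝ) (h : ContDiff ℝ (⊤ : ℕ∞) lam) (s t : ℝ) :
    HasDerivAt (fun u => lam (s, u)) (fderiv ℝ lam (s, t) (0, 1)) t := by
  have h1 : HasDerivAt (fun u : ℝ => ((s, u) : ℝ × ℝ)) (0, 1) t :=
    (hasDerivAt_const t s).prodMk (hasDerivAt_id t)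
  exact ((h.differentiable (by simp) (s, t)).hasFDerivAt.comp_hasDerivAt t h1)

lemma slice_deriv_h (lam : ℝ × ℝ → ℝ) (h : ContDiff ℝ (⊤ : ℕ∞) lam) (s t : ℝ) :
    HasDerivAt (fun u => lam (u, t)) (fderiv ℝ lam (s, t) (1, 0)) s := by
  have h1 : HasDerivAt (fun u : ℝ => ((u, t) : ℝ × ℝ)) (1, 0) s :=
    (hasDerivAt_id s).prodMk (hasDerivAt_const s t)
  exact ((h.differentiable (by simp) (s, t)).hasFDerivAt.comp_hasDerivAt s h1)

lemma cont_fderiv_apply (lam : ℝ × ℝ → ℝ) (h : ContDiff ℝ (⊤ : ℕ∞) lam) (v : ℝ × ℝ) :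
    Continuous (fun p => fderiv ℝ lam p v) := by
  have : Continuous (fderiv ℝ lam) := (h.fderiv_right (m := (⊤ : ℕ∞)) (by simp)).continuous
  exact this.clm_apply continuous_const

lemma ftc_v (lam : ℝ × ℝ → ℝ) (h : ContDiff ℝ (⊤ : ℕ∞) lam) (s c d : ℝ) :
    ∫ t in c..d, deriv (fun u => lam (s, u)) t = lam (s, d) - lam (s, c) := by
  apply intervalIntegral.integral_deriv_eq_sub
  · exact fun x _ => (slice_deriv_v lam h s x).differentiableAt
  · apply Continuous.intervalIntegrable
    rw [show (deriv fun u => lam (s, u)) = fun t => fderiv ℝ lam (s, t) (0, 1) from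
      funext fun t => (slice_deriv_v lam h s t).deriv]
    exact (cont_fderiv_apply lam h (0,1)).comp (continuous_const.prodMk continuous_id)

lemma ftc_h (lam : ℝ × ℝ → ℝ) (h : ContDiff ℝ (⊤ : ℕ∞) lam) (t c d : ℝ) :
    ∫ s in c..d, deriv (fun u => lam (u, t)) s = lam (d, t) - lam (c, t) := by
  apply intervalIntegral.integral_deriv_eq_sub
  · exact fun x _ => (slice_deriv_h lam h x t).differentiableAt
  · apply Continuous.intervalIntegrable
    rw [show (deriv fun u => lam (u, t)) = fun s => fderiv ℝ lam (s, t) (1, 0) from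
      funext fun s => (slice_deriv_h lam h s t).deriv]
    exact (cont_fderiv_apply lam h (1,0)).comp (continuous_id.prodMk continuous_const)

lemma const_aux (g h : ℝ × ℝ → ℝ) (hg : ContDiff ℝ (⊤ : ℕ∞) g) (hh : ContDiff ℝ (⊤ : ℕ∞) h)
    (hcl : ∀ p : ℝ × ℝ, deriv (fun t => g (p.1, t)) p.2 + deriv (fun s => h (s, p.2)) p.1 = 0)
    (hper : ∀ t s : ℝ, h (s + 1, t) = h (s, t)) (y : ℝ) :
    ∫ s in (0:ℝ)..1, g (s, y) = ∫ s in (0:ℝ)..1, g (s, 0) := by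
  have key : (∫ s in (0:ℝ)..1, g (s, y)) - ∫ s in (0:ℝ)..1, g (s, 0)
      = ∫ s in (0:ℝ)..1, (g (s, y) - g (s, 0)) := by
    rw [intervalIntegral.integral_sub]
    · exact (hg.continuous.comp (continuous_id.prodMk continuous_const)).intervalIntegrable _ _
    · exact (hg.continuous.comp (continuous_id.prodMk continuous_const)).intervalIntegrable _ _
  have step1 : ∀ s : ℝ, g (s, y) - g (s, 0) = ∫ t in (0:ℝ)..y, fderiv ℝ g (s, t) (0, 1) := by
    intro s
    rw [show (fun t => (fderiv ℝ g (s, t)) (0, 1)) = deriv fun u => g (s, u) from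
      (funext fun t => (slice_deriv_v g hg s t).deriv).symm]
    exact (ftc_v g hg s 0 y).symm
  have hD : ∀ p : ℝ × ℝ, fderiv ℝ g p (0, 1) = - fderiv ℝ h p (1, 0) := by
    rintro ⟨a, b⟩
    have e1 := (slice_deriv_v g hg a b).deriv
    have e2 := (slice_deriv_h h hh a b).deriv
    have hc := hcl (a, b)
    simp only at hc
    rw [e1, e2] at hc
    linarith
  have swap : ∫ s in (0:ℝ)..1, (∫ t in (0:ℝ)..y, fderiv ℝ g (s, t) (0, 1))
      = ∫ t in (0:ℝ)..y, ∫ s in (0:ℝ)..1, fderiv ℝ g (s, t) (0, 1) :=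
    swap_full (fun p => fderiv ℝ g p (0, 1)) (cont_fderiv_apply g hg _) 0 1 0 y
  have inner : ∀ t : ℝ, (∫ s in (0:ℝ)..1, fderiv ℝ g (s, t) (0, 1)) = 0 := by
    intro t
    have h1 : (∫ s in (0:ℝ)..1, fderiv ℝ g (s, t) (0, 1))
        = - ∫ s in (0:ℝ)..1, fderiv ℝ h (s, t) (1, 0) := by
      rw [← intervalIntegral.integral_neg]
      exact intervalIntegral.integral_congr fun s _ => hD (s, t)
    have h2 : (∫ s in (0:ℝ)..1, fderiv ℝ h (s, t) (1, 0))
        = ∫ s in (0:ℝ)..1, deriv (fun u => h (u, t)) s :=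
      intervalIntegral.integral_congr fun s _ => ((slice_deriv_h h hh s t).deriv).symm
    have h3 := ftc_h h hh t 0 1
    have h4 : h (1, t) = h (0, t) := by simpa using hper t 0
    rw [h1, h2, h3, h4, sub_self, neg_zero]
  have : (∫ s in (0:ℝ)..1, g (s, y)) - ∫ s in (0:ℝ)..1, g (s, 0) = 0 := by
    rw [key, intervalIntegral.integral_congr (fun s _ => step1 s), swap,
      intervalIntegral.integral_congr (fun t _ => inner t)]
    simp
  linarith

lemma per_translate (g : ℝ → ℝ) (hg : Continuous g) (hper : Function.Periodic g 1) (x : ℝ) (n : ℤ) :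
    ∫ s in (0:ℝ)..(x + n), g s = (∫ s in (0:ℝ)..x, g s) + n * ∫ s in (0:ℝ)..1, g s := by
  have hint : ∀ t₁ t₂ : ℝ, IntervalIntegrable g MeasureSpace.volume t₁ t₂ :=
    fun t₁ t₂ => hg.intervalIntegrable _ _
  have h1 : ∫ s in x..(x + n • (1:ℝ)), g s = n • ∫ s in x..(x+1), g s :=
    hper.intervalIntegral_add_zsmul_eq n x hint
  have h2 : ∫ s in x..(x+1), g s = ∫ s in (0:ℝ)..(0+1), g s := hper.intervalIntegral_add_eq x 0
  have h3 : ∫ s in (0:ℝ)..(x + n), g s = (∫ s in (0:ℝ)..x, g s) + ∫ s in x..(x + n), g s :=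
    (intervalIntegral.integral_add_adjacent_intervals (hint 0 x) (hint x _)).symm
  rw [h3]
  have : (x + (n:ℝ)) = x + n • (1:ℝ) := by simp
  rw [this, h1, h2]
  simp [zsmul_eq_mul]

lemma icc_fubini (lam : ℝ × ℝ → ℝ) (hc : Continuous lam) :
    ∫ p in Set.Icc (0:ℝ) 1 ×ˢ Set.Icc (0:ℝ) 1, lam p
      = ∫ t in (0:ℝ)..1, ∫ s in (0:ℝ)..1, lam (s, t) := by
  have hint : IntegrableOn lam (Set.Icc (0:ℝ) 1 ×ˢ Set.Icc (0:ℝ) 1)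
      ((volume : Measure ℝ).prod volume) := by
    rw [← Measure.volume_eq_prod]
    exact hc.continuousOn.integrableOn_compact (isCompact_Icc.prod isCompact_Icc)
  rw [Measure.volume_eq_prod, MeasureTheory.setIntegral_prod lam hint]
  have e1 : ∀ s : ℝ, (∫ t in Set.Icc (0:ℝ) 1, lam (s, t)) = ∫ t in (0:ℝ)..1, lam (s, t) := by
    intro s
    rw [MeasureTheory.integral_Icc_eq_integral_Ioc, intervalIntegral.integral_of_le zero_le_one]
  calc ∫ s in Set.Icc (0:ℝ) 1, ∫ t in Set.Icc (0:ℝ) 1, lam (s, t)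
      = ∫ s in Set.Icc (0:ℝ) 1, ∫ t in (0:ℝ)..1, lam (s, t) :=
        setIntegral_congr_fun measurableSet_Icc fun s _ => e1 s
    _ = ∫ s in (0:ℝ)..1, ∫ t in (0:ℝ)..1, lam (s, t) := by
        rw [MeasureTheory.integral_Icc_eq_integral_Ioc, intervalIntegral.integral_of_le zero_le_one]
    _ = ∫ t in (0:ℝ)..1, ∫ s in (0:ℝ)..1, lam (s, t) := swap_full lam hc 0 1 0 1

noncomputable section

theorem f_alpha_periodic_iff (lam₁ lam₂ : ℝ × ℝ → ℝ)
    (h₁ : ContDiff ℝ (⊤ : ℕ∞) lam₁) (h₂ : ContDiff ℝ (⊤ : ℕ∞) lam₂)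
    (hper₁ : ∀ (x : ℝ × ℝ) (z : ℤ × ℤ), lam₁ (x.1 + z.1, x.2 + z.2) = lam₁ x)
    (hper₂ : ∀ (x : ℝ × ℝ) (z : ℤ × ℤ), lam₂ (x.1 + z.1, x.2 + z.2) = lam₂ x)
    (hclosed : ∀ p : ℝ × ℝ,
      deriv (fun t => lam₁ (p.1, t)) p.2 + deriv (fun s => lam₂ (s, p.2)) p.1 = 0)
    (l₁ l₂ : ℝ)
    (hl₁ : l₁ = ∫ p in Set.Icc (0:ℝ) 1 ×ˢ Set.Icc (0:ℝ) 1, lam₁ p)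
    (hl₂ : l₂ = ∫ p in Set.Icc (0:ℝ) 1 ×ˢ Set.Icc (0:ℝ) 1, lam₂ p)
    (α : ℝ) (f : ℝ × ℝ → ℂ)
    (hf : ∀ p : ℝ × ℝ,
      f p = Complex.exp (Complex.I * (Real.pi * α) *
        (((∫ s in (0:ℝ)..p.1, (lam₁ (s, p.2) + lam₁ (s, 0))) -
          ∫ t in (0:ℝ)..p.2, (lam₂ (p.1, t) + lam₂ (0, t)) : ℝ) : ℂ))) :
    (∀ (x : ℝ × ℝ) (n m : ℤ), f (x.1 + n, x.2 + m) = f x) ↔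
      ((∃ k : ℤ, α * l₁ = k) ∧ (∃ k : ℤ, α * l₂ = k)) := by
  have hcont₁ : Continuous lam₁ := h₁.continuous
  have hcont₂ : Continuous lam₂ := h₂.continuous
  -- A is constant equal to l₁
  have hcA := const_aux lam₁ lam₂ h₁ h₂ hclosed
    (fun t s => by have := hper₂ (s, t) (1, 0); push_cast at this; simpa using this)
  have hA : ∀ y : ℝ, (∫ s in (0:ℝ)..1, lam₁ (s, y)) = l₁ := by
    intro y
    rw [hcA y]
    have hl : l₁ = ∫ t in (0:ℝ)..1, ∫ s in (0:ℝ)..1, lam₁ (s, t) := by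
      rw [hl₁, icc_fubini lam₁ hcont₁]
    rw [hl, intervalIntegral.integral_congr (fun t _ => hcA t)]
    simp
  -- B is constant equal to l₂
  have hcB' := const_aux (fun p => lam₂ (p.2, p.1)) (fun p => lam₁ (p.2, p.1))
    (h₂.comp (contDiff_snd.prodMk contDiff_fst)) (h₁.comp (contDiff_snd.prodMk contDiff_fst))
    (fun p => by
      have hc := hclosed (p.2, p.1)
      dsimp only at hc ⊢
      linarith)
    (fun t s => by have := hper₁ (t, s) (0, 1); push_cast at this; simpa using this)
  have hcB : ∀ y : ℝ, (∫ t in (0:ℝ)..1, lam₂ (y, t)) = ∫ t in (0:ℝ)..1, lam₂ (0, t) :=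
    fun y => hcB' y
  have hB : ∀ x : ℝ, (∫ t in (0:ℝ)..1, lam₂ (x, t)) = l₂ := by
    intro x
    rw [hcB x]
    have hl : l₂ = ∫ s in (0:ℝ)..1, ∫ t in (0:ℝ)..1, lam₂ (s, t) := by
      rw [hl₂, icc_fubini lam₂ hcont₂, ← swap_full lam₂ hcont₂ 0 1 0 1]
    rw [hl, intervalIntegral.integral_congr (fun s _ => hcB s)]
    simp
  -- integrability of slices
  have hi₁ : ∀ (y : ℝ) (a b : ℝ),
      IntervalIntegrable (fun s => lam₁ (s, y) + lam₁ (s, 0)) volume a b :=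
    fun y a b => ((hcont₁.comp (continuous_id.prodMk continuous_const)).add
      (hcont₁.comp (continuous_id.prodMk continuous_const))).intervalIntegrable a b
  have hi₂ : ∀ (x : ℝ) (a b : ℝ),
      IntervalIntegrable (fun t => lam₂ (x, t) + lam₂ (0, t)) volume a b :=
    fun x a b => ((hcont₂.comp (continuous_const.prodMk continuous_id)).add
      (hcont₂.comp (continuous_const.prodMk continuous_id))).intervalIntegrable a b
  have ci₁ : ∀ y : ℝ, Continuous (fun s => lam₁ (s, y)) :=
    fun y => hcont₁.comp (continuous_id.prodMk continuous_const)
  have ci₂ : ∀ x : ℝ, Continuous (fun t => lam₂ (x, t)) :=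
    fun x => hcont₂.comp (continuous_const.prodMk continuous_id)
  have hA2 : ∀ y : ℝ, (∫ s in (0:ℝ)..1, (lam₁ (s, y) + lam₁ (s, 0))) = 2 * l₁ := by
    intro y
    rw [intervalIntegral.integral_add ((ci₁ y).intervalIntegrable 0 1)
      ((ci₁ 0).intervalIntegrable 0 1), hA y, hA 0]
    ring
  have hB2 : ∀ x : ℝ, (∫ t in (0:ℝ)..1, (lam₂ (x, t) + lam₂ (0, t))) = 2 * l₂ := by
    intro x
    rw [intervalIntegral.integral_add ((ci₂ x).intervalIntegrable 0 1)
      ((ci₂ 0).intervalIntegrable 0 1), hB x, hB 0]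
    ring
  -- the key translation relation
  have hrel : ∀ (x : ℝ × ℝ) (n m : ℤ), f (x.1 + n, x.2 + m) =
      f x * Complex.exp (Complex.I * (Real.pi * α) *
        ((2 * n * l₁ - 2 * m * l₂ : ℝ) : ℂ)) := by
    rintro ⟨x, y⟩ n m
    have e1 : (∫ s in (0:ℝ)..(x + (n:ℝ)), (lam₁ (s, y + (m:ℝ)) + lam₁ (s, 0)))
        = (∫ s in (0:ℝ)..x, (lam₁ (s, y) + lam₁ (s, 0))) + n * (2 * l₁) := by
      have hpy : ∀ s : ℝ, lam₁ (s, y + (m:ℝ)) = lam₁ (s, y) := fun s => by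
        have := hper₁ (s, y) (0, m); push_cast at this; simpa using this
      have hper : Function.Periodic (fun s => lam₁ (s, y) + lam₁ (s, 0)) 1 := by
        intro s
        have u1 := hper₁ (s, y) (1, 0)
        have u2 := hper₁ (s, 0) (1, 0)
        push_cast at u1 u2
        simp only [add_zero] at u1 u2
        simp [u1, u2]
      have := per_translate (fun s => lam₁ (s, y) + lam₁ (s, 0))
        ((hcont₁.comp (continuous_id.prodMk continuous_const)).add
          (hcont₁.comp (continuous_id.prodMk continuous_const))) hper x n
      rw [intervalIntegral.integral_congr (fun s _ => by rw [hpy s]), this, hA2 y]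
    have e2 : (∫ t in (0:ℝ)..(y + (m:ℝ)), (lam₂ (x + (n:ℝ), t) + lam₂ (0, t)))
        = (∫ t in (0:ℝ)..y, (lam₂ (x, t) + lam₂ (0, t))) + m * (2 * l₂) := by
      have hpx : ∀ t : ℝ, lam₂ (x + (n:ℝ), t) = lam₂ (x, t) := fun t => by
        have := hper₂ (x, t) (n, 0); push_cast at this; simpa using this
      have hper : Function.Periodic (fun t => lam₂ (x, t) + lam₂ (0, t)) 1 := by
        intro t
        have u1 := hper₂ (x, t) (0, 1)
        have u2 := hper₂ (0, t) (0, 1)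
        push_cast at u1 u2
        simp only [add_zero] at u1 u2
        simp [u1, u2]
      have := per_translate (fun t => lam₂ (x, t) + lam₂ (0, t))
        ((hcont₂.comp (continuous_const.prodMk continuous_id)).add
          (hcont₂.comp (continuous_const.prodMk continuous_id))) hper y m
      rw [intervalIntegral.integral_congr (fun t _ => by rw [hpx t]), this, hB2 x]
    rw [hf, hf, ← Complex.exp_add]
    simp only
    congr 1
    rw [e1, e2]
    push_cast
    ring
  have hfne : ∀ p : ℝ × ℝ, f p ≠ 0 := fun p => by rw [hf]; exact Complex.exp_ne_zero _
  constructor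
  · intro H
    have hone : ∀ n m : ℤ, Complex.exp (Complex.I * (Real.pi * α) *
        ((2 * n * l₁ - 2 * m * l₂ : ℝ) : ℂ)) = 1 := by
      intro n m
      have h0 := H (0, 0) n m
      rw [hrel (0, 0) n m] at h0
      exact mul_left_cancel₀ (hfne (0, 0)) (h0.trans (mul_one _).symm)
    have h2pi : (2 * Real.pi : ℝ) ≠ 0 := by positivity
    constructor
    · obtain ⟨k, hk⟩ := Complex.exp_eq_one_iff.mp (hone 1 0)
      refine ⟨k, ?_⟩
      have hc : Complex.I * ((2 * Real.pi * (α * l₁) : ℝ) : ℂ)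
          = Complex.I * ((2 * Real.pi * (k:ℝ) : ℝ) : ℂ) := by
        push_cast at hk ⊢
        linear_combination hk
      have hr : (2 * Real.pi * (α * l₁) : ℝ) = 2 * Real.pi * (k:ℝ) := by
        exact_mod_cast mul_left_cancel₀ Complex.I_ne_zero hc
      exact mul_left_cancel₀ h2pi hr
    · obtain ⟨k, hk⟩ := Complex.exp_eq_one_iff.mp (hone 0 1)
      refine ⟨-k, ?_⟩
      have hc : Complex.I * ((2 * Real.pi * (α * l₂) : ℝ) : ℂ)
          = Complex.I * ((2 * Real.pi * ((-k : ℤ):ℝ) : ℝ) : ℂ) := by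
        push_cast at hk ⊢
        linear_combination -hk
      have hr : (2 * Real.pi * (α * l₂) : ℝ) = 2 * Real.pi * ((-k : ℤ):ℝ) := by
        exact_mod_cast mul_left_cancel₀ Complex.I_ne_zero hc
      exact mul_left_cancel₀ h2pi hr
  · rintro ⟨⟨k₁, hk₁⟩, ⟨k₂, hk₂⟩⟩ x n m
    rw [hrel x n m]
    have c₁ : (α : ℂ) * l₁ = (k₁ : ℂ) := by exact_mod_cast hk₁
    have c₂ : (α : ℂ) * l₂ = (k₂ : ℂ) := by exact_mod_cast hk₂
    have harg : Complex.I * (Real.pi * α) * ((2 * n * l₁ - 2 * m * l₂ : ℝ) : ℂ)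
        = ((n * k₁ - m * k₂ : ℤ) : ℂ) * (2 * Real.pi * Complex.I) := by
      push_cast
      linear_combination (2 * (n:ℂ) * Complex.I * (Real.pi:ℂ)) * c₁
        - (2 * (m:ℂ) * Complex.I * (Real.pi:ℂ)) * c₂
    rw [harg, Complex.exp_int_mul_two_pi_mul_I, mul_one]
end
end

section
/- Suppose in addition that λ₁ and λ₂ are everywhere positive and that l₁/l₂ is irrational. Then every smooth ℤ²-periodic function f : ℝ² → ℂ satisfying the transport equation λ₂ ∂f/∂x₁ + λ₁ ∂f/∂x₂ = 0 is constant. In terms of the Lorentzian torus (T², −λ₁²dx₁² + λ₂²dx₂²) with the trivial Spin structure, the space of positive harmonic spinors has dimension δ₊⁰ = 1. -/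
noncomputable section

open MeasureTheory intervalIntegral Set

namespace HS

def pd1 (g : ℝ × ℝ → ℝ) (p : ℝ × ℝ) : ℝ := fderiv ℝ g p (1, 0)
def pd2 (g : ℝ × ℝ → ℝ) (p : ℝ × ℝ) : ℝ := fderiv ℝ g p (0, 1)

theorem hasDerivAt_fst {g : ℝ × ℝ → ℝ} (hg : ContDiff ℝ (⊤ : ℕ∞) g) (a b : ℝ) :
    HasDerivAt (fun s => g (s, b)) (pd1 g (a, b)) a := by
  have h1 : HasDerivAt (fun s : ℝ => (s, b)) ((1 : ℝ), (0 : ℝ)) a :=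
    HasDerivAt.prodMk (hasDerivAt_id a) (hasDerivAt_const a b)
  exact ((hg.differentiable (by simp) (a, b)).hasFDerivAt).comp_hasDerivAt a h1

theorem hasDerivAt_snd {g : ℝ × ℝ → ℝ} (hg : ContDiff ℝ (⊤ : ℕ∞) g) (a b : ℝ) :
    HasDerivAt (fun t => g (a, t)) (pd2 g (a, b)) b := by
  have h1 : HasDerivAt (fun t : ℝ => (a, t)) ((0 : ℝ), (1 : ℝ)) b :=
    HasDerivAt.prodMk (hasDerivAt_const b a) (hasDerivAt_id b)
  exact ((hg.differentiable (by simp) (a, b)).hasFDerivAt).comp_hasDerivAt b h1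

theorem continuous_pd1 {g : ℝ × ℝ → ℝ} (hg : ContDiff ℝ (⊤ : ℕ∞) g) : Continuous (pd1 g) :=
  (hg.continuous_fderiv (by simp)).clm_apply continuous_const

theorem continuous_pd2 {g : ℝ × ℝ → ℝ} (hg : ContDiff ℝ (⊤ : ℕ∞) g) : Continuous (pd2 g) :=
  (hg.continuous_fderiv (by simp)).clm_apply continuous_const

theorem mem_fund (p : ℝ × ℝ) :
    ((Int.fract p.1, Int.fract p.2) : ℝ × ℝ) ∈ Icc (0:ℝ) 1 ×ˢ Icc (0:ℝ) 1 :=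
  ⟨⟨Int.fract_nonneg _, (Int.fract_lt_one _).le⟩,
   ⟨Int.fract_nonneg _, (Int.fract_lt_one _).le⟩⟩

theorem periodic_reduce {h : ℝ × ℝ → ℝ}
    (hper : ∀ (x : ℝ × ℝ) (z : ℤ × ℤ), h (x.1 + z.1, x.2 + z.2) = h x) (p : ℝ × ℝ) :
    h p = h (Int.fract p.1, Int.fract p.2) := by
  have := hper (Int.fract p.1, Int.fract p.2) (⌊p.1⌋, ⌊p.2⌋)
  simp only [Int.fract_add_floor] at this
  rw [← this]

theorem periodic_bddAbove {h : ℝ × ℝ → ℝ} (hc : Continuous h)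
    (hper : ∀ (x : ℝ × ℝ) (z : ℤ × ℤ), h (x.1 + z.1, x.2 + z.2) = h x) :
    ∃ M : ℝ, ∀ p, h p ≤ M := by
  have hK : IsCompact (Icc (0:ℝ) 1 ×ˢ Icc (0:ℝ) 1) := isCompact_Icc.prod isCompact_Icc
  obtain ⟨x₀, _, hmax⟩ := hK.exists_isMaxOn
    ⟨(0,0), by simp [Set.mem_prod]⟩ hc.continuousOn
  exact ⟨h x₀, fun p => (periodic_reduce hper p) ▸ hmax (mem_fund p)⟩

theorem periodic_pos_lb {h : ℝ × ℝ → ℝ} (hc : Continuous h)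
    (hper : ∀ (x : ℝ × ℝ) (z : ℤ × ℤ), h (x.1 + z.1, x.2 + z.2) = h x)
    (hpos : ∀ p, 0 < h p) :
    ∃ ε : ℝ, 0 < ε ∧ ∀ p, ε ≤ h p := by
  have hK : IsCompact (Icc (0:ℝ) 1 ×ˢ Icc (0:ℝ) 1) := isCompact_Icc.prod isCompact_Icc
  obtain ⟨x₀, _, hmin⟩ := hK.exists_isMinOn
    ⟨(0,0), by simp [Set.mem_prod]⟩ hc.continuousOn
  exact ⟨h x₀, hpos x₀, fun p => (periodic_reduce hper p) ▸ hmin (mem_fund p)⟩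

/-- Fubini for interval integrals of continuous functions. -/
theorem swap_cont {F : ℝ × ℝ → ℝ} (hF : Continuous F) (a b c d : ℝ) :
    ∫ s in a..b, (∫ t in c..d, F (s, t)) = ∫ t in c..d, ∫ s in a..b, F (s, t) := by
  have base : ∀ a b c d : ℝ, a ≤ b → c ≤ d →
      ∫ s in a..b, (∫ t in c..d, F (s, t)) = ∫ t in c..d, ∫ s in a..b, F (s, t) := by
    intro a b c d hab hcd
    rw [integral_of_le hab, integral_of_le hcd]
    simp_rw [integral_of_le hab, integral_of_le hcd]
    apply MeasureTheory.integral_integral_swap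
    have h : IntegrableOn (Function.uncurry fun s t => F (s, t)) (Ioc a b ×ˢ Ioc c d) := by
      apply (hF.continuousOn.integrableOn_compact (isCompact_Icc.prod isCompact_Icc)).mono_set
      · exact Set.prod_mono Ioc_subset_Icc_self Ioc_subset_Icc_self
    rw [Measure.prod_restrict, ← Measure.volume_eq_prod]
    exact h
  rcases le_total a b with hab | hab <;> rcases le_total c d with hcd | hcd
  · exact base a b c d hab hcd
  · simp_rw [integral_symm d c]
    rw [intervalIntegral.integral_neg, base a b d c hab hcd]
  · simp_rw [integral_symm b a]
    rw [intervalIntegral.integral_neg, base b a c d hab hcd]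
  · simp_rw [integral_symm b a, integral_symm d c]
    simp only [intervalIntegral.integral_neg, neg_neg]
    rw [base b a d c hab hcd]


section Main

variable {lam₁ lam₂ : ℝ × ℝ → ℝ}

/-- FTC in the first variable. -/
theorem ftc1 (h₂ : ContDiff ℝ (⊤ : ℕ∞) lam₂) (t a c : ℝ) :
    ∫ s in a..c, pd1 lam₂ (s, t) = lam₂ (c, t) - lam₂ (a, t) := by
  apply integral_eq_sub_of_hasDerivAt (fun x _ => hasDerivAt_fst h₂ x t)
  exact ((continuous_pd1 h₂).comp (continuous_id.prodMk continuous_const)).intervalIntegrable a c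

/-- FTC in the second variable. -/
theorem ftc2 (h₁ : ContDiff ℝ (⊤ : ℕ∞) lam₁) (s b y : ℝ) :
    ∫ t in b..y, pd2 lam₁ (s, t) = lam₁ (s, y) - lam₁ (s, b) := by
  apply integral_eq_sub_of_hasDerivAt (fun x _ => hasDerivAt_snd h₁ s x)
  exact ((continuous_pd2 h₁).comp (continuous_const.prodMk continuous_id)).intervalIntegrable b y

theorem closed_pd (h₁ : ContDiff ℝ (⊤ : ℕ∞) lam₁) (h₂ : ContDiff ℝ (⊤ : ℕ∞) lam₂)
    (hclosed : ∀ p : ℝ × ℝ,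
      deriv (fun t => lam₁ (p.1, t)) p.2 + deriv (fun s => lam₂ (s, p.2)) p.1 = 0)
    (p : ℝ × ℝ) : pd1 lam₂ p = - pd2 lam₁ p := by
  have h := hclosed p
  rw [(hasDerivAt_snd h₁ p.1 p.2).deriv, (hasDerivAt_fst h₂ p.1 p.2).deriv] at h
  linarith

/-- Key identity, consequence of closedness (Green/Fubini). -/
theorem key_identity (h₁ : ContDiff ℝ (⊤ : ℕ∞) lam₁) (h₂ : ContDiff ℝ (⊤ : ℕ∞) lam₂)
    (hclosed : ∀ p : ℝ × ℝ,
      deriv (fun t => lam₁ (p.1, t)) p.2 + deriv (fun s => lam₂ (s, p.2)) p.1 = 0)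
    (a c y : ℝ) :
    ∫ t in (0:ℝ)..y, (lam₂ (c, t) - lam₂ (a, t)) = ∫ s in a..c, (lam₁ (s, 0) - lam₁ (s, y)) := by
  have e1 : ∀ t : ℝ, lam₂ (c, t) - lam₂ (a, t) = ∫ s in a..c, pd1 lam₂ (s, t) :=
    fun t => (ftc1 h₂ t a c).symm
  calc ∫ t in (0:ℝ)..y, (lam₂ (c, t) - lam₂ (a, t))
      = ∫ t in (0:ℝ)..y, ∫ s in a..c, pd1 lam₂ (s, t) := by
        apply intervalIntegral.integral_congr; intro t _; exact e1 t
    _ = ∫ s in a..c, ∫ t in (0:ℝ)..y, pd1 lam₂ (s, t) :=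
        swap_cont (F := fun p => pd1 lam₂ (p.2, p.1))
          ((continuous_pd1 h₂).comp (continuous_snd.prodMk continuous_fst)) 0 y a c
    _ = ∫ s in a..c, ∫ t in (0:ℝ)..y, -pd2 lam₁ (s, t) := by
        apply intervalIntegral.integral_congr; intro s _
        apply intervalIntegral.integral_congr; intro t _
        exact closed_pd h₁ h₂ hclosed (s, t)
    _ = ∫ s in a..c, -(lam₁ (s, y) - lam₁ (s, 0)) := by
        apply intervalIntegral.integral_congr; intro s _
        show (∫ t in (0:ℝ)..y, -pd2 lam₁ (s, t)) = -(lam₁ (s, y) - lam₁ (s, 0))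
        rw [intervalIntegral.integral_neg, ftc2 h₁ s 0 y]
    _ = ∫ s in a..c, (lam₁ (s, 0) - lam₁ (s, y)) := by
        apply intervalIntegral.integral_congr; intro s _; ring


/-- The potential function. -/
def phi (lam₁ lam₂ : ℝ × ℝ → ℝ) (x : ℝ × ℝ) : ℝ :=
  (∫ s in (0:ℝ)..x.1, lam₁ (s, 0)) - ∫ t in (0:ℝ)..x.2, lam₂ (x.1, t)

/-- Total derivative of `phi`. -/
def Lphi (lam₁ lam₂ : ℝ × ℝ → ℝ) (p : ℝ × ℝ) : ℝ × ℝ →L[ℝ] ℝ :=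
  lam₁ p • (ContinuousLinearMap.fst ℝ ℝ ℝ) - lam₂ p • (ContinuousLinearMap.snd ℝ ℝ ℝ)

theorem Lphi_apply (p : ℝ × ℝ) (v : ℝ × ℝ) :
    Lphi lam₁ lam₂ p v = lam₁ p * v.1 - lam₂ p * v.2 := by
  simp [Lphi, smul_eq_mul]

theorem hasFDerivAt_B (h₁ : ContDiff ℝ (⊤ : ℕ∞) lam₁) (h₂ : ContDiff ℝ (⊤ : ℕ∞) lam₂)
    (hclosed : ∀ p : ℝ × ℝ,
      deriv (fun t => lam₁ (p.1, t)) p.2 + deriv (fun s => lam₂ (s, p.2)) p.1 = 0)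
    (a b : ℝ) :
    HasFDerivAt (fun x : ℝ × ℝ => ∫ t in (0:ℝ)..x.2, lam₂ (x.1, t))
      ((lam₁ (a, 0) - lam₁ (a, b)) • (ContinuousLinearMap.fst ℝ ℝ ℝ)
        + lam₂ (a, b) • (ContinuousLinearMap.snd ℝ ℝ ℝ)) (a, b) := by
  set G : ℝ × ℝ → ℝ := fun x => lam₁ (x.1, 0) - lam₁ x with hG
  have hGc : Continuous G :=
    (h₁.continuous.comp (continuous_fst.prodMk continuous_const)).sub h₁.continuous
  rw [hasFDerivAt_iff_isLittleO, Asymptotics.isLittleO_iff]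
  intro c hc
  have hc2 : 0 < c / 2 := by linarith
  obtain ⟨δ₁, hδ₁, hG1⟩ := Metric.continuousAt_iff.1 hGc.continuousAt (c/2) hc2
  obtain ⟨δ₂, hδ₂, hL2⟩ := Metric.continuousAt_iff.1
    ((h₂.continuous.comp (continuous_const.prodMk continuous_id)).continuousAt
      (x := b)) (c/2) hc2
  rw [Metric.eventually_nhds_iff]
  refine ⟨min δ₁ δ₂, lt_min hδ₁ hδ₂, fun x hx => ?_⟩
  have hd1 : dist x (a, b) < δ₁ := hx.trans_le (min_le_left _ _)
  have hd2 : dist x (a, b) < δ₂ := hx.trans_le (min_le_right _ _)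
  have hdist1 : |x.1 - a| ≤ dist x (a, b) := by
    rw [Prod.dist_eq]; simpa [Real.dist_eq] using le_max_left _ _
  have hdist2 : |x.2 - b| ≤ dist x (a, b) := by
    rw [Prod.dist_eq]; simpa [Real.dist_eq] using le_max_right _ _
  -- integrability
  have i1 : ∀ (u v w : ℝ), IntervalIntegrable (fun t => lam₂ (u, t)) volume v w :=
    fun u v w => (h₂.continuous.comp (continuous_const.prodMk continuous_id)).intervalIntegrable _ _
  have i2 : ∀ (y u v : ℝ), IntervalIntegrable (fun s => G (s, y)) volume u v :=
    fun y u v => (hGc.comp (continuous_id.prodMk continuous_const)).intervalIntegrable _ _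
  -- the exact decomposition
  have e1 : (∫ t in (0:ℝ)..x.2, lam₂ (x.1, t)) - (∫ t in (0:ℝ)..x.2, lam₂ (a, t))
      = ∫ s in a..x.1, G (s, x.2) := by
    rw [← intervalIntegral.integral_sub (i1 x.1 0 x.2) (i1 a 0 x.2)]
    exact key_identity h₁ h₂ hclosed a x.1 x.2
  have e2 : (∫ t in (0:ℝ)..x.2, lam₂ (a, t)) - (∫ t in (0:ℝ)..b, lam₂ (a, t))
      = ∫ t in b..x.2, lam₂ (a, t) := by
    rw [sub_eq_iff_eq_add, add_comm]
    exact (intervalIntegral.integral_add_adjacent_intervals (i1 a 0 b) (i1 a b x.2)).symm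
  have key : (∫ t in (0:ℝ)..x.2, lam₂ (x.1, t)) - (∫ t in (0:ℝ)..b, lam₂ (a, t))
      - (((lam₁ (a, 0) - lam₁ (a, b)) • (ContinuousLinearMap.fst ℝ ℝ ℝ)
        + lam₂ (a, b) • (ContinuousLinearMap.snd ℝ ℝ ℝ)) (x - (a, b)))
      = (∫ s in a..x.1, (G (s, x.2) - G (a, b)))
        + ∫ t in b..x.2, (lam₂ (a, t) - lam₂ (a, b)) := by
    have c1 : (∫ s in a..x.1, (G (s, x.2) - G (a, b)))
        = (∫ s in a..x.1, G (s, x.2)) - (x.1 - a) * G (a, b) := by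
      rw [intervalIntegral.integral_sub (i2 x.2 a x.1)
        (intervalIntegrable_const), intervalIntegral.integral_const, smul_eq_mul]
    have c2 : (∫ t in b..x.2, (lam₂ (a, t) - lam₂ (a, b)))
        = (∫ t in b..x.2, lam₂ (a, t)) - (x.2 - b) * lam₂ (a, b) := by
      rw [intervalIntegral.integral_sub (i1 a b x.2)
        (intervalIntegrable_const), intervalIntegral.integral_const, smul_eq_mul]
    rw [c1, c2, ← e1, ← e2]
    simp only [ContinuousLinearMap.add_apply, ContinuousLinearMap.coe_smul',
      Pi.smul_apply, ContinuousLinearMap.coe_fst', ContinuousLinearMap.coe_snd',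
      Prod.fst_sub, Prod.snd_sub, smul_eq_mul]
    ring
  rw [key]
  have b1 : ‖∫ s in a..x.1, (G (s, x.2) - G (a, b))‖ ≤ c / 2 * |x.1 - a| := by
    apply intervalIntegral.norm_integral_le_of_norm_le_const
    intro s hs
    have hs' : |s - a| ≤ |x.1 - a| := abs_sub_left_of_mem_uIcc (Set.uIoc_subset_uIcc hs)
    have : dist (s, x.2) (a, b) < δ₁ := by
      rw [Prod.dist_eq, Real.dist_eq, Real.dist_eq]
      exact max_lt ((hs'.trans hdist1).trans_lt hd1) (hdist2.trans_lt hd1)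
    have := hG1 this
    rw [Real.dist_eq] at this
    exact le_of_lt (by simpa [Real.norm_eq_abs] using this)
  have b2 : ‖∫ t in b..x.2, (lam₂ (a, t) - lam₂ (a, b))‖ ≤ c / 2 * |x.2 - b| := by
    apply intervalIntegral.norm_integral_le_of_norm_le_const
    intro t ht
    have ht' : |t - b| ≤ |x.2 - b| := abs_sub_left_of_mem_uIcc (Set.uIoc_subset_uIcc ht)
    have : dist t b < δ₂ := by
      rw [Real.dist_eq]; exact lt_of_le_of_lt (ht'.trans hdist2) hd2
    have := hL2 this
    rw [Real.dist_eq] at this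
    exact le_of_lt (by simpa [Real.norm_eq_abs] using this)
  have hnorm : ‖x - (a, b)‖ = dist x (a, b) := by rw [dist_eq_norm]
  calc ‖(∫ s in a..x.1, (G (s, x.2) - G (a, b)))
        + ∫ t in b..x.2, (lam₂ (a, t) - lam₂ (a, b))‖
      ≤ c / 2 * |x.1 - a| + c / 2 * |x.2 - b| := (norm_add_le _ _).trans (add_le_add b1 b2)
    _ ≤ c / 2 * dist x (a, b) + c / 2 * dist x (a, b) := by
        apply add_le_add <;> exact mul_le_mul_of_nonneg_left (by assumption) hc2.le
    _ = c * ‖x - (a, b)‖ := by rw [hnorm]; ring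

theorem hasFDerivAt_phi (h₁ : ContDiff ℝ (⊤ : ℕ∞) lam₁) (h₂ : ContDiff ℝ (⊤ : ℕ∞) lam₂)
    (hclosed : ∀ p : ℝ × ℝ,
      deriv (fun t => lam₁ (p.1, t)) p.2 + deriv (fun s => lam₂ (s, p.2)) p.1 = 0)
    (p : ℝ × ℝ) : HasFDerivAt (phi lam₁ lam₂) (Lphi lam₁ lam₂ p) p := by
  obtain ⟨a, b⟩ := p
  have hA : HasDerivAt (fun r => ∫ s in (0:ℝ)..r, lam₁ (s, 0)) (lam₁ (a, 0)) a :=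
    (((h₁.continuous.comp (continuous_id.prodMk continuous_const))).integral_hasStrictDerivAt
      0 a).hasDerivAt
  have hAp : HasFDerivAt (fun x : ℝ × ℝ => ∫ s in (0:ℝ)..x.1, lam₁ (s, 0))
      ((ContinuousLinearMap.smulRight (1 : ℝ →L[ℝ] ℝ) (lam₁ (a, 0))).comp
        (ContinuousLinearMap.fst ℝ ℝ ℝ)) (a, b) :=
    HasFDerivAt.comp (g := fun r => ∫ s in (0:ℝ)..r, lam₁ (s, 0)) (a, b) hA.hasFDerivAt
      (hasFDerivAt_fst (p := (a, b)))
  have hsub := hAp.sub (hasFDerivAt_B h₁ h₂ hclosed a b)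
  have heq : ((ContinuousLinearMap.smulRight (1 : ℝ →L[ℝ] ℝ) (lam₁ (a, 0))).comp
        (ContinuousLinearMap.fst ℝ ℝ ℝ))
      - ((lam₁ (a, 0) - lam₁ (a, b)) • (ContinuousLinearMap.fst ℝ ℝ ℝ)
        + lam₂ (a, b) • (ContinuousLinearMap.snd ℝ ℝ ℝ)) = Lphi lam₁ lam₂ (a, b) := by
    apply ContinuousLinearMap.ext
    rintro ⟨ξ, η⟩
    simp [Lphi, smul_eq_mul]
    ring
  rw [heq] at hsub
  exact hsub


theorem hasDerivAt_phi_snd (h₁ : ContDiff ℝ (⊤ : ℕ∞) lam₁) (h₂ : ContDiff ℝ (⊤ : ℕ∞) lam₂)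
    (hclosed : ∀ p : ℝ × ℝ,
      deriv (fun t => lam₁ (p.1, t)) p.2 + deriv (fun s => lam₂ (s, p.2)) p.1 = 0)
    (a t : ℝ) : HasDerivAt (fun t => phi lam₁ lam₂ (a, t)) (-(lam₂ (a, t))) t := by
  have h1 : HasDerivAt (fun t : ℝ => (a, t)) ((0 : ℝ), (1 : ℝ)) t :=
    HasDerivAt.prodMk (hasDerivAt_const t a) (hasDerivAt_id t)
  have := (hasFDerivAt_phi h₁ h₂ hclosed (a, t)).comp_hasDerivAt t h1
  refine this.congr_deriv ?_
  rw [Lphi_apply]; ring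

theorem hasDerivAt_phi_fst (h₁ : ContDiff ℝ (⊤ : ℕ∞) lam₁) (h₂ : ContDiff ℝ (⊤ : ℕ∞) lam₂)
    (hclosed : ∀ p : ℝ × ℝ,
      deriv (fun t => lam₁ (p.1, t)) p.2 + deriv (fun s => lam₂ (s, p.2)) p.1 = 0)
    (s t : ℝ) : HasDerivAt (fun s => phi lam₁ lam₂ (s, t)) (lam₁ (s, t)) s := by
  have h1 : HasDerivAt (fun s : ℝ => (s, t)) ((1 : ℝ), (0 : ℝ)) s :=
    HasDerivAt.prodMk (hasDerivAt_id s) (hasDerivAt_const s t)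
  have := (hasFDerivAt_phi h₁ h₂ hclosed (s, t)).comp_hasDerivAt s h1
  refine this.congr_deriv ?_
  rw [Lphi_apply]; ring

section Claims

variable (h₁ : ContDiff ℝ (⊤ : ℕ∞) lam₁) (h₂ : ContDiff ℝ (⊤ : ℕ∞) lam₂)
  (hclosed : ∀ p : ℝ × ℝ,
      deriv (fun t => lam₁ (p.1, t)) p.2 + deriv (fun s => lam₂ (s, p.2)) p.1 = 0)

include h₁ h₂ hclosed

theorem claim_c1 (hper₂ : ∀ (x : ℝ × ℝ) (z : ℤ × ℤ), lam₂ (x.1 + z.1, x.2 + z.2) = lam₂ x)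
    (y : ℝ) : ∫ s in (0:ℝ)..1, lam₁ (s, y) = ∫ s in (0:ℝ)..1, lam₁ (s, 0) := by
  have hk := key_identity h₁ h₂ hclosed 0 1 y
  have hz : ∀ t : ℝ, lam₂ ((1:ℝ), t) - lam₂ (0, t) = 0 := by
    intro t
    have := hper₂ (0, t) (1, 0)
    push_cast at this
    simp only [zero_add, add_zero] at this
    rw [this]; ring
  have h0 : (∫ t in (0:ℝ)..y, (lam₂ ((1:ℝ), t) - lam₂ (0, t))) = 0 := by
    rw [intervalIntegral.integral_congr (g := fun _ => (0:ℝ)) (fun t _ => hz t)]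
    simp
  rw [h0] at hk
  have := intervalIntegral.integral_sub
    ((h₁.continuous.comp (continuous_id.prodMk continuous_const)).intervalIntegrable 0 1)
    ((h₁.continuous.comp (continuous_id.prodMk continuous_const)).intervalIntegrable 0 1)
    (μ := volume) (f := fun s => lam₁ (s, 0)) (g := fun s => lam₁ (s, y))
  rw [this] at hk
  linarith

theorem claim_c2 (hper₁ : ∀ (x : ℝ × ℝ) (z : ℤ × ℤ), lam₁ (x.1 + z.1, x.2 + z.2) = lam₁ x)
    (x : ℝ) : ∫ t in (0:ℝ)..1, lam₂ (x, t) = ∫ t in (0:ℝ)..1, lam₂ ((0:ℝ), t) := by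
  have hk := key_identity h₁ h₂ hclosed 0 x 1
  have hz : ∀ s : ℝ, lam₁ (s, 0) - lam₁ (s, 1) = 0 := by
    intro s
    have := hper₁ (s, 0) (0, 1)
    push_cast at this
    simp only [zero_add, add_zero] at this
    rw [this]; ring
  have h0 : (∫ s in (0:ℝ)..x, (lam₁ (s, 0) - lam₁ (s, 1))) = 0 := by
    rw [intervalIntegral.integral_congr (g := fun _ => (0:ℝ)) (fun s _ => hz s)]
    simp
  rw [h0] at hk
  have := intervalIntegral.integral_sub
    ((h₂.continuous.comp (continuous_const.prodMk continuous_id)).intervalIntegrable 0 1)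
    ((h₂.continuous.comp (continuous_const.prodMk continuous_id)).intervalIntegrable 0 1)
    (μ := volume) (f := fun t => lam₂ (x, t)) (g := fun t => lam₂ ((0:ℝ), t))
  rw [this] at hk
  linarith

theorem lval₂ {l₂ : ℝ} (hper₁ : ∀ (x : ℝ × ℝ) (z : ℤ × ℤ), lam₁ (x.1 + z.1, x.2 + z.2) = lam₁ x)
    (hl₂ : l₂ = ∫ p in Set.Icc (0:ℝ) 1 ×ˢ Set.Icc (0:ℝ) 1, lam₂ p) :
    l₂ = ∫ t in (0:ℝ)..1, lam₂ ((0:ℝ), t) := by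
  rw [hl₂, Measure.volume_eq_prod, MeasureTheory.setIntegral_prod]
  · have : ∀ x : ℝ, (∫ y in Icc (0:ℝ) 1, lam₂ (x, y)) = ∫ t in (0:ℝ)..1, lam₂ ((0:ℝ), t) := by
      intro x
      rw [MeasureTheory.integral_Icc_eq_integral_Ioc, ← intervalIntegral.integral_of_le zero_le_one]
      exact claim_c2 h₁ h₂ hclosed hper₁ x
    rw [MeasureTheory.integral_congr_ae (Filter.Eventually.of_forall fun x => this x)]
    simp
  · rw [← Measure.volume_eq_prod]
    exact (h₂.continuous.continuousOn.integrableOn_compact (isCompact_Icc.prod isCompact_Icc))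

theorem lval₁ {l₁ : ℝ} (hper₂ : ∀ (x : ℝ × ℝ) (z : ℤ × ℤ), lam₂ (x.1 + z.1, x.2 + z.2) = lam₂ x)
    (hl₁ : l₁ = ∫ p in Set.Icc (0:ℝ) 1 ×ˢ Set.Icc (0:ℝ) 1, lam₁ p) :
    l₁ = ∫ s in (0:ℝ)..1, lam₁ (s, 0) := by
  rw [hl₁, Measure.volume_eq_prod, MeasureTheory.setIntegral_prod]
  · have inner : ∀ x : ℝ, (∫ y in Icc (0:ℝ) 1, lam₁ (x, y)) = ∫ y in (0:ℝ)..1, lam₁ (x, y) := by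
      intro x
      rw [MeasureTheory.integral_Icc_eq_integral_Ioc, ← intervalIntegral.integral_of_le zero_le_one]
    rw [MeasureTheory.integral_congr_ae (Filter.Eventually.of_forall fun x => inner x),
      MeasureTheory.integral_Icc_eq_integral_Ioc, ← intervalIntegral.integral_of_le zero_le_one,
      swap_cont h₁.continuous 0 1 0 1]
    have : ∀ y : ℝ, y ∈ uIcc (0:ℝ) 1 → (∫ x in (0:ℝ)..1, lam₁ (x, y)) = ∫ s in (0:ℝ)..1, lam₁ (s, 0) :=
      fun y _ => claim_c1 h₁ h₂ hclosed hper₂ y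
    rw [intervalIntegral.integral_congr this]
    simp
  · rw [← Measure.volume_eq_prod]
    exact (h₁.continuous.continuousOn.integrableOn_compact (isCompact_Icc.prod isCompact_Icc))

theorem phi_P1 {l₁ : ℝ}
    (hper₁ : ∀ (x : ℝ × ℝ) (z : ℤ × ℤ), lam₁ (x.1 + z.1, x.2 + z.2) = lam₁ x)
    (hper₂ : ∀ (x : ℝ × ℝ) (z : ℤ × ℤ), lam₂ (x.1 + z.1, x.2 + z.2) = lam₂ x)
    (hl₁ : l₁ = ∫ s in (0:ℝ)..1, lam₁ (s, 0)) (x₁ x₂ : ℝ) :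
    phi lam₁ lam₂ (x₁ + 1, x₂) = phi lam₁ lam₂ (x₁, x₂) + l₁ := by
  have c₁ : Continuous (fun s : ℝ => lam₁ (s, 0)) :=
    h₁.continuous.comp (continuous_id.prodMk continuous_const)
  have hperA : Function.Periodic (fun s : ℝ => lam₁ (s, 0)) 1 := by
    intro s
    have := hper₁ (s, 0) (1, 0)
    push_cast at this
    simpa using this
  have hsplit : (∫ s in (0:ℝ)..(x₁ + 1), lam₁ (s, 0))
      = (∫ s in (0:ℝ)..x₁, lam₁ (s, 0)) + ∫ s in x₁..(x₁ + 1), lam₁ (s, 0) :=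
    (intervalIntegral.integral_add_adjacent_intervals (c₁.intervalIntegrable _ _)
      (c₁.intervalIntegrable _ _)).symm
  have hshift : (∫ s in x₁..(x₁ + 1), lam₁ (s, 0)) = l₁ := by
    rw [hperA.intervalIntegral_add_eq x₁ 0, zero_add, hl₁]
  have hsame : (∫ t in (0:ℝ)..x₂, lam₂ (x₁ + 1, t)) = ∫ t in (0:ℝ)..x₂, lam₂ (x₁, t) := by
    apply intervalIntegral.integral_congr
    intro t _
    have := hper₂ (x₁, t) (1, 0)
    push_cast at this
    simpa using this
  simp only [phi]
  rw [hsplit, hshift, hsame]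
  ring

theorem phi_P2 {l₂ : ℝ}
    (hper₁' : ∀ (x : ℝ × ℝ) (z : ℤ × ℤ), lam₁ (x.1 + z.1, x.2 + z.2) = lam₁ x)
    (hper₂ : ∀ (x : ℝ × ℝ) (z : ℤ × ℤ), lam₂ (x.1 + z.1, x.2 + z.2) = lam₂ x)
    (hl₂ : l₂ = ∫ t in (0:ℝ)..1, lam₂ ((0:ℝ), t)) (x₁ x₂ : ℝ) :
    phi lam₁ lam₂ (x₁, x₂ + 1) = phi lam₁ lam₂ (x₁, x₂) - l₂ := by
  have c₂ : Continuous (fun t : ℝ => lam₂ (x₁, t)) :=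
    h₂.continuous.comp (continuous_const.prodMk continuous_id)
  have hperB : Function.Periodic (fun t : ℝ => lam₂ (x₁, t)) 1 := by
    intro t
    have := hper₂ (x₁, t) (0, 1)
    push_cast at this
    simpa using this
  have hsplit : (∫ t in (0:ℝ)..(x₂ + 1), lam₂ (x₁, t))
      = (∫ t in (0:ℝ)..x₂, lam₂ (x₁, t)) + ∫ t in x₂..(x₂ + 1), lam₂ (x₁, t) :=
    (intervalIntegral.integral_add_adjacent_intervals (c₂.intervalIntegrable _ _)
      (c₂.intervalIntegrable _ _)).symm
  have hshift : (∫ t in x₂..(x₂ + 1), lam₂ (x₁, t)) = l₂ := by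
    rw [hperB.intervalIntegral_add_eq x₂ 0, zero_add, hl₂]
    exact claim_c2 h₁ h₂ hclosed hper₁' x₁
  simp only [phi]
  rw [hsplit, hshift]
  ring

end Claims

section Trans

variable (h₁ : ContDiff ℝ (⊤ : ℕ∞) lam₁) (h₂ : ContDiff ℝ (⊤ : ℕ∞) lam₂)
  (hclosed : ∀ p : ℝ × ℝ,
      deriv (fun t => lam₁ (p.1, t)) p.2 + deriv (fun s => lam₂ (s, p.2)) p.1 = 0)
  (hper₁ : ∀ (x : ℝ × ℝ) (z : ℤ × ℤ), lam₁ (x.1 + z.1, x.2 + z.2) = lam₁ x)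
  (hper₂ : ∀ (x : ℝ × ℝ) (z : ℤ × ℤ), lam₂ (x.1 + z.1, x.2 + z.2) = lam₂ x)
  {l₁ l₂ : ℝ} (hl₁ : l₁ = ∫ s in (0:ℝ)..1, lam₁ (s, 0))
  (hl₂ : l₂ = ∫ t in (0:ℝ)..1, lam₂ ((0:ℝ), t))

include h₁ h₂ hclosed hper₁ hper₂ hl₁ hl₂ in
theorem phi_Pm (m n : ℤ) (x₁ x₂ : ℝ) :
    phi lam₁ lam₂ (x₁ + m, x₂ + n) = phi lam₁ lam₂ (x₁, x₂) + m * l₁ - n * l₂ := by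
  have A : ∀ (m : ℤ) (y₁ y₂ : ℝ), phi lam₁ lam₂ (y₁ + m, y₂) = phi lam₁ lam₂ (y₁, y₂) + m * l₁ := by
    intro m
    induction m using Int.induction_on with
    | zero => simp
    | succ k ih =>
      intro y₁ y₂
      have h := phi_P1 h₁ h₂ hclosed hper₁ hper₂ hl₁ (y₁ + (k : ℝ)) y₂
      rw [show y₁ + (k : ℝ) + 1 = y₁ + ((k : ℤ) + 1 : ℤ) by push_cast; ring] at h
      have ih' := ih y₁ y₂
      push_cast at ih' h ⊢
      rw [h, ih']
      ring
    | pred k ih =>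
      intro y₁ y₂
      have h := phi_P1 h₁ h₂ hclosed hper₁ hper₂ hl₁ (y₁ + (-(k : ℝ) - 1)) y₂
      rw [show y₁ + (-(k : ℝ) - 1) + 1 = y₁ + (-(k : ℤ) : ℤ) by push_cast; ring] at h
      rw [show y₁ + ((-(k : ℤ) - 1 : ℤ) : ℝ) = y₁ + (-(k : ℝ) - 1) by push_cast; ring]
      have hih := ih y₁ y₂
      rw [hih] at h
      push_cast at h ⊢
      linarith
  have B : ∀ (n : ℤ) (y₁ y₂ : ℝ), phi lam₁ lam₂ (y₁, y₂ + n) = phi lam₁ lam₂ (y₁, y₂) - n * l₂ := by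
    intro n
    induction n using Int.induction_on with
    | zero => simp
    | succ k ih =>
      intro y₁ y₂
      have h := phi_P2 h₁ h₂ hclosed hper₁ hper₂ hl₂ y₁ (y₂ + (k : ℝ))
      rw [show y₂ + (k : ℝ) + 1 = y₂ + ((k : ℤ) + 1 : ℤ) by push_cast; ring] at h
      have ih' := ih y₁ y₂
      push_cast at ih' h ⊢
      rw [h, ih']
      ring
    | pred k ih =>
      intro y₁ y₂
      have h := phi_P2 h₁ h₂ hclosed hper₁ hper₂ hl₂ y₁ (y₂ + (-(k : ℝ) - 1))
      rw [show y₂ + (-(k : ℝ) - 1) + 1 = y₂ + (-(k : ℤ) : ℤ) by push_cast; ring] at h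
      rw [show y₂ + ((-(k : ℤ) - 1 : ℤ) : ℝ) = y₂ + (-(k : ℝ) - 1) by push_cast; ring]
      have hih := ih y₁ y₂
      rw [hih] at h
      push_cast at h ⊢
      linarith
  rw [B n (x₁ + m) x₂, A m x₁ x₂]

end Trans

theorem psi_strictAnti (h₁ : ContDiff ℝ (⊤ : ℕ∞) lam₁) (h₂ : ContDiff ℝ (⊤ : ℕ∞) lam₂)
    (hclosed : ∀ p : ℝ × ℝ,
      deriv (fun t => lam₁ (p.1, t)) p.2 + deriv (fun s => lam₂ (s, p.2)) p.1 = 0)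
    (hpos₂ : ∀ p, 0 < lam₂ p) (a : ℝ) :
    StrictAnti (fun t => phi lam₁ lam₂ (a, t)) := by
  apply strictAnti_of_deriv_neg
  intro t
  rw [(hasDerivAt_phi_snd h₁ h₂ hclosed a t).deriv]
  simpa using hpos₂ (a, t)

theorem psi_surj (h₁ : ContDiff ℝ (⊤ : ℕ∞) lam₁) (h₂ : ContDiff ℝ (⊤ : ℕ∞) lam₂)
    (hclosed : ∀ p : ℝ × ℝ,
      deriv (fun t => lam₁ (p.1, t)) p.2 + deriv (fun s => lam₂ (s, p.2)) p.1 = 0)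
    {ε : ℝ} (hε : 0 < ε) (hεle : ∀ p, ε ≤ lam₂ p) (a : ℝ) :
    Function.Surjective (fun t => phi lam₁ lam₂ (a, t)) := by
  set ψ : ℝ → ℝ := fun t => phi lam₁ lam₂ (a, t) with hψ
  have hψd : ∀ t, HasDerivAt ψ (-(lam₂ (a, t))) t := hasDerivAt_phi_snd h₁ h₂ hclosed a
  have hcont : Continuous ψ := continuous_iff_continuousAt.2 fun t => (hψd t).continuousAt
  have hval : ∀ t, ψ t = ψ 0 - ∫ x in (0:ℝ)..t, lam₂ (a, x) := by
    intro t; simp [hψ, phi]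
  have i1 : ∀ v w : ℝ, IntervalIntegrable (fun x => lam₂ (a, x)) volume v w :=
    fun v w => (h₂.continuous.comp (continuous_const.prodMk continuous_id)).intervalIntegrable _ _
  have bound1 : ∀ t : ℝ, 0 ≤ t → ψ t ≤ ψ 0 - ε * t := by
    intro t ht
    have : ε * t = ∫ x in (0:ℝ)..t, ε := by rw [intervalIntegral.integral_const]; simp [mul_comm]
    rw [hval t, this]
    have := intervalIntegral.integral_mono_on ht intervalIntegrable_const (i1 0 t)
      (fun x _ => hεle (a, x))
    linarith
  have bound2 : ∀ t : ℝ, t ≤ 0 → ψ 0 - ε * t ≤ ψ t := by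
    intro t ht
    have hsym : (∫ x in (0:ℝ)..t, lam₂ (a, x)) = -∫ x in t..(0:ℝ), lam₂ (a, x) :=
      intervalIntegral.integral_symm t 0
    have : ε * (0 - t) = ∫ x in t..(0:ℝ), ε := by rw [intervalIntegral.integral_const]; simp [mul_comm]
    have hmono := intervalIntegral.integral_mono_on ht intervalIntegrable_const (i1 t 0)
      (fun x _ => hεle (a, x))
    have h3 : ε * (0 - t) ≤ ∫ x in t..(0:ℝ), lam₂ (a, x) := this ▸ hmono
    rw [hval t, hsym]
    linarith
  intro y
  set T₂ : ℝ := max 0 ((ψ 0 - y) / ε) with hT₂def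
  set T₁ : ℝ := min 0 ((ψ 0 - y) / ε) with hT₁def
  have hT₂ : ψ T₂ ≤ y := by
    have h2 := bound1 T₂ (le_max_left _ _)
    have : ψ 0 - y ≤ ε * T₂ := by
      rw [hT₂def]
      calc ψ 0 - y = ε * ((ψ 0 - y) / ε) := by field_simp
        _ ≤ ε * max 0 ((ψ 0 - y) / ε) := by
            apply mul_le_mul_of_nonneg_left (le_max_right _ _) hε.le
    linarith
  have hT₁ : y ≤ ψ T₁ := by
    have h2 := bound2 T₁ (min_le_left _ _)
    have : ε * T₁ ≤ ψ 0 - y := by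
      rw [hT₁def]
      calc ε * min 0 ((ψ 0 - y) / ε) ≤ ε * ((ψ 0 - y) / ε) :=
            mul_le_mul_of_nonneg_left (min_le_right _ _) hε.le
        _ = ψ 0 - y := by field_simp
    linarith
  obtain ⟨t, _, ht⟩ := intermediate_value_Icc' (min_le_max) hcont.continuousOn
    (Set.mem_Icc.2 ⟨hT₂, hT₁⟩)
  exact ⟨t, ht⟩

theorem fderiv_periodic {g : ℝ × ℝ → ℝ} (hg : ContDiff ℝ (⊤ : ℕ∞) g)
    (hper : ∀ (x : ℝ × ℝ) (z : ℤ × ℤ), g (x.1 + z.1, x.2 + z.2) = g x) (p : ℝ × ℝ) (z : ℤ × ℤ) :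
    fderiv ℝ g (p.1 + z.1, p.2 + z.2) = fderiv ℝ g p := by
  have htrans : HasFDerivAt (fun x : ℝ × ℝ => x + ((z.1 : ℝ), (z.2 : ℝ)))
      (ContinuousLinearMap.id ℝ (ℝ × ℝ)) p := (hasFDerivAt_id p).add_const _
  have hpt : p + ((z.1 : ℝ), (z.2 : ℝ)) = (p.1 + z.1, p.2 + z.2) := rfl
  have hcomp := ((hg.differentiable (by simp) (p.1 + z.1, p.2 + z.2)).hasFDerivAt.comp p
    (by rw [← hpt] at *; exact htrans) : HasFDerivAt (g ∘ fun x : ℝ × ℝ => x + ((z.1 : ℝ), (z.2 : ℝ)))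
      ((fderiv ℝ g (p.1 + z.1, p.2 + z.2)).comp (ContinuousLinearMap.id ℝ (ℝ × ℝ))) p)
  have hfun : (g ∘ fun x : ℝ × ℝ => x + ((z.1 : ℝ), (z.2 : ℝ))) = g := by
    funext x
    exact hper x z
  rw [hfun, ContinuousLinearMap.comp_id] at hcomp
  exact hcomp.fderiv.symm

theorem ode_exists (h₁ : ContDiff ℝ (⊤ : ℕ∞) lam₁) (h₂ : ContDiff ℝ (⊤ : ℕ∞) lam₂)
    (hpos₂ : ∀ p, 0 < lam₂ p)
    (hper₁ : ∀ (x : ℝ × ℝ) (z : ℤ × ℤ), lam₁ (x.1 + z.1, x.2 + z.2) = lam₁ x)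
    (hper₂ : ∀ (x : ℝ × ℝ) (z : ℤ × ℤ), lam₂ (x.1 + z.1, x.2 + z.2) = lam₂ x)
    (a b c : ℝ) (hac : a ≤ c) :
    ∃ u : ℝ → ℝ, u a = b ∧ ∀ s ∈ Icc a c,
      HasDerivWithinAt u (lam₁ (s, u s) / lam₂ (s, u s)) (Icc a c) s := by
  set V : ℝ × ℝ → ℝ := fun p => lam₁ p / lam₂ p with hV
  have hVc : ContDiff ℝ (⊤ : ℕ∞) V := h₁.div h₂ (fun p => (hpos₂ p).ne')
  have hVper : ∀ (x : ℝ × ℝ) (z : ℤ × ℤ), V (x.1 + z.1, x.2 + z.2) = V x := by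
    intro x z
    simp only [hV, hper₁ x z, hper₂ x z]
  obtain ⟨C, hC⟩ := periodic_bddAbove (continuous_abs.comp hVc.continuous)
    (fun x z => by simp [hVper x z])
  have hC0 : 0 ≤ C := (abs_nonneg _).trans (hC (0, 0))
  obtain ⟨K, hK⟩ := periodic_bddAbove (continuous_norm.comp (hVc.continuous_fderiv (by simp)))
    (fun x z => by simp only [Function.comp_apply, fderiv_periodic hVc hVper x z])
  have hK0 : 0 ≤ K := (norm_nonneg _).trans (hK (0, 0))
  have hLip : ∀ s : ℝ, LipschitzWith K.toNNReal (fun y => V (s, y)) := by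
    intro s
    apply lipschitzWith_of_nnnorm_deriv_le
    · intro y
      exact ((hVc.differentiable (by simp) (s, y)).hasFDerivAt.comp_hasDerivAt y
        (HasDerivAt.prodMk (hasDerivAt_const y s) (hasDerivAt_id y))).differentiableAt
    · intro y
      rw [(hasDerivAt_snd hVc s y).deriv]
      have hle : ‖pd2 V (s, y)‖ ≤ K := by
        have h1 : ‖fderiv ℝ V (s, y) ((0:ℝ), (1:ℝ))‖ ≤ ‖fderiv ℝ V (s, y)‖ * ‖((0:ℝ), (1:ℝ))‖ :=
          (fderiv ℝ V (s, y)).le_opNorm _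
        have h2 : ‖((0:ℝ), (1:ℝ))‖ = 1 := by simp [Prod.norm_def]
        rw [h2, mul_one] at h1
        exact h1.trans (hK (s, y))
      rw [← NNReal.coe_le_coe, coe_nnnorm, Real.coe_toNNReal K hK0]
      exact hle
  have hpl : IsPicardLindelof (fun s y => V (s, y)) (⟨a, le_refl a, hac⟩ : Icc a c) b
      (C * (c - a)).toNNReal 0 C.toNNReal K.toNNReal :=
    { lipschitzOnWith := fun t _ => (hLip t).lipschitzOnWith
      continuousOn := fun x _ =>
        (hVc.continuous.comp (continuous_id.prodMk continuous_const)).continuousOn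
      norm_le := fun t _ x _ => by
        rw [Real.coe_toNNReal C hC0]; simpa [Real.norm_eq_abs] using hC (t, x)
      mul_max_le := by
        simp only [Real.coe_toNNReal C hC0, NNReal.coe_zero, sub_zero, sub_self]
        rw [max_eq_left (by linarith : (0:ℝ) ≤ c - a),
          Real.coe_toNNReal _ (mul_nonneg hC0 (by linarith))] }
  obtain ⟨u, hu0, hud⟩ := hpl.exists_eq_forall_mem_Icc_hasDerivWithinAt (x := b) (by simp)
  exact ⟨u, hu0, fun s hs => hud s hs⟩

theorem const_on_Icc {E : Type*} [NormedAddCommGroup E] [NormedSpace ℝ E] {w : ℝ → E} {a c : ℝ}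
    (hw : ∀ s ∈ Icc a c, HasDerivWithinAt w 0 (Icc a c) s) : ∀ x ∈ Icc a c, w x = w a := by
  apply constant_of_has_deriv_right_zero (fun s hs => (hw s hs).continuousWithinAt)
  intro y hy
  exact (hw y ⟨hy.1, hy.2.le⟩).mono_of_mem_nhdsWithin (Icc_mem_nhdsGE_of_mem hy)

theorem leaf_const (h₁ : ContDiff ℝ (⊤ : ℕ∞) lam₁) (h₂ : ContDiff ℝ (⊤ : ℕ∞) lam₂)
    (hclosed : ∀ p : ℝ × ℝ,
      deriv (fun t => lam₁ (p.1, t)) p.2 + deriv (fun s => lam₂ (s, p.2)) p.1 = 0)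
    (hpos₂ : ∀ p, 0 < lam₂ p)
    (hper₁ : ∀ (x : ℝ × ℝ) (z : ℤ × ℤ), lam₁ (x.1 + z.1, x.2 + z.2) = lam₁ x)
    (hper₂ : ∀ (x : ℝ × ℝ) (z : ℤ × ℤ), lam₂ (x.1 + z.1, x.2 + z.2) = lam₂ x)
    {f : ℝ × ℝ → ℂ} (hf : ContDiff ℝ (⊤ : ℕ∞) f)
    (hftrans : ∀ p : ℝ × ℝ,
      (lam₂ p : ℂ) * deriv (fun s => f (s, p.2)) p.1 +
        (lam₁ p : ℂ) * deriv (fun t => f (p.1, t)) p.2 = 0)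
    (p q : ℝ × ℝ) (hle : p.1 ≤ q.1) (hphi : phi lam₁ lam₂ p = phi lam₁ lam₂ q) :
    f p = f q := by
  obtain ⟨u, hu0, hud⟩ := ode_exists h₁ h₂ hpos₂ hper₁ hper₂ p.1 p.2 q.1 hle
  have hmem : q.1 ∈ Icc p.1 q.1 := ⟨hle, le_refl _⟩
  have hphiw : ∀ s ∈ Icc p.1 q.1,
      HasDerivWithinAt (fun s => phi lam₁ lam₂ (s, u s)) 0 (Icc p.1 q.1) s := by
    intro s hs
    have hγ : HasDerivWithinAt (fun s => (s, u s))
        ((1 : ℝ), lam₁ (s, u s) / lam₂ (s, u s)) (Icc p.1 q.1) s :=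
      HasDerivWithinAt.prodMk (hasDerivWithinAt_id s _) (hud s hs)
    have hcomp := (hasFDerivAt_phi h₁ h₂ hclosed (s, u s)).comp_hasDerivWithinAt s hγ
    refine hcomp.congr_deriv ?_
    rw [Lphi_apply]
    have hne := (hpos₂ (s, u s)).ne'
    field_simp
    ring
  have hphiconst := const_on_Icc hphiw q.1 hmem
  have hchain : phi lam₁ lam₂ (q.1, u q.1) = phi lam₁ lam₂ (q.1, q.2) := by
    calc phi lam₁ lam₂ (q.1, u q.1) = phi lam₁ lam₂ (p.1, u p.1) := hphiconst
      _ = phi lam₁ lam₂ p := by rw [hu0]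
      _ = phi lam₁ lam₂ q := hphi
      _ = phi lam₁ lam₂ (q.1, q.2) := rfl
  have huq : u q.1 = q.2 := (psi_strictAnti h₁ h₂ hclosed hpos₂ q.1).injective hchain
  have hfd : ∀ p' : ℝ × ℝ, (fderiv ℝ f p') ((1 : ℝ), lam₁ p' / lam₂ p') = 0 := by
    intro p'
    have hD := (hf.differentiable (by simp) p').hasFDerivAt
    have h10 : deriv (fun s => f (s, p'.2)) p'.1 = fderiv ℝ f p' (1, 0) := by
      have h1 : HasDerivAt (fun s : ℝ => (s, p'.2)) ((1 : ℝ), (0 : ℝ)) p'.1 :=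
        HasDerivAt.prodMk (hasDerivAt_id _) (hasDerivAt_const _ _)
      exact (hD.comp_hasDerivAt p'.1 h1).deriv
    have h01 : deriv (fun t => f (p'.1, t)) p'.2 = fderiv ℝ f p' (0, 1) := by
      have h1 : HasDerivAt (fun t : ℝ => (p'.1, t)) ((0 : ℝ), (1 : ℝ)) p'.2 :=
        HasDerivAt.prodMk (hasDerivAt_const _ _) (hasDerivAt_id _)
      exact (hD.comp_hasDerivAt p'.2 h1).deriv
    have ht := hftrans p'
    rw [h10, h01] at ht
    have hdec : (fderiv ℝ f p') ((1 : ℝ), lam₁ p' / lam₂ p')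
        = fderiv ℝ f p' (1, 0) + (lam₁ p' / lam₂ p') • fderiv ℝ f p' (0, 1) := by
      rw [← ContinuousLinearMap.map_smul, ← ContinuousLinearMap.map_add]
      congr 1
      simp [Prod.ext_iff]
    rw [hdec]
    have hlam2ne : (lam₂ p' : ℂ) ≠ 0 := by exact_mod_cast (hpos₂ p').ne'
    rw [Complex.real_smul]
    push_cast
    field_simp
    linear_combination ht
  have hfw : ∀ s ∈ Icc p.1 q.1,
      HasDerivWithinAt (fun s => f (s, u s)) 0 (Icc p.1 q.1) s := by
    intro s hs
    have hγ : HasDerivWithinAt (fun s => (s, u s))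
        ((1 : ℝ), lam₁ (s, u s) / lam₂ (s, u s)) (Icc p.1 q.1) s :=
      HasDerivWithinAt.prodMk (hasDerivWithinAt_id s _) (hud s hs)
    have hcomp := ((hf.differentiable (by simp) (s, u s)).hasFDerivAt).comp_hasDerivWithinAt s hγ
    rw [hfd (s, u s)] at hcomp
    exact hcomp
  have hfconst := const_on_Icc hfw q.1 hmem
  calc f p = f (p.1, u p.1) := by rw [hu0]
    _ = f (q.1, u q.1) := hfconst.symm
    _ = f q := by rw [huq]

end Main

end HS

theorem harmonic_spinor_constant_of_irrational_ratio (lam₁ lam₂ : ℝ × ℝ → ℝ)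
    (h₁ : ContDiff ℝ (⊤ : ℕ∞) lam₁) (h₂ : ContDiff ℝ (⊤ : ℕ∞) lam₂)
    (hper₁ : ∀ (x : ℝ × ℝ) (z : ℤ × ℤ), lam₁ (x.1 + z.1, x.2 + z.2) = lam₁ x)
    (hper₂ : ∀ (x : ℝ × ℝ) (z : ℤ × ℤ), lam₂ (x.1 + z.1, x.2 + z.2) = lam₂ x)
    (hclosed : ∀ p : ℝ × ℝ,
      deriv (fun t => lam₁ (p.1, t)) p.2 + deriv (fun s => lam₂ (s, p.2)) p.1 = 0)
    (hpos₁ : ∀ p, 0 < lam₁ p) (hpos₂ : ∀ p, 0 < lam₂ p)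
    (l₁ l₂ : ℝ)
    (hl₁ : l₁ = ∫ p in Set.Icc (0:ℝ) 1 ×ˢ Set.Icc (0:ℝ) 1, lam₁ p)
    (hl₂ : l₂ = ∫ p in Set.Icc (0:ℝ) 1 ×ˢ Set.Icc (0:ℝ) 1, lam₂ p)
    (hirr : Irrational (l₁ / l₂))
    (f : ℝ × ℝ → ℂ) (hf : ContDiff ℝ (⊤ : ℕ∞) f)
    (hfper : ∀ (x : ℝ × ℝ) (z : ℤ × ℤ), f (x.1 + z.1, x.2 + z.2) = f x)
    (hftrans : ∀ p : ℝ × ℝ,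
      (lam₂ p : ℂ) * deriv (fun s => f (s, p.2)) p.1 +
        (lam₁ p : ℂ) * deriv (fun t => f (p.1, t)) p.2 = 0) :
    ∀ p q : ℝ × ℝ, f p = f q := by
  intro p q
  have hl₁' := HS.lval₁ h₁ h₂ hclosed hper₂ hl₁
  have hl₂' := HS.lval₂ h₁ h₂ hclosed hper₁ hl₂
  have leaf : ∀ p' q' : ℝ × ℝ, HS.phi lam₁ lam₂ p' = HS.phi lam₁ lam₂ q' → f p' = f q' := by
    intro p' q' hpq
    rcases le_total p'.1 q'.1 with h | h
    · exact HS.leaf_const h₁ h₂ hclosed hpos₂ hper₁ hper₂ hf hftrans p' q' h hpq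
    · exact (HS.leaf_const h₁ h₂ hclosed hpos₂ hper₁ hper₂ hf hftrans q' p' h hpq.symm).symm
  have hl₂ne : l₂ ≠ 0 := by
    intro h0
    exact hirr ⟨0, by simp [h0]⟩
  have hdense : Dense ((AddSubgroup.closure ({l₁, l₂} : Set ℝ) : AddSubgroup ℝ) : Set ℝ) := by
    rcases AddSubgroup.dense_or_cyclic (AddSubgroup.closure ({l₁, l₂} : Set ℝ)) with h | ⟨g, hg⟩
    · exact h
    · exfalso
      have hl₁m : l₁ ∈ AddSubgroup.closure ({l₁, l₂} : Set ℝ) :=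
        AddSubgroup.subset_closure (by simp)
      have hl₂m : l₂ ∈ AddSubgroup.closure ({l₁, l₂} : Set ℝ) :=
        AddSubgroup.subset_closure (by simp)
      rw [hg, AddSubgroup.mem_closure_singleton] at hl₁m hl₂m
      obtain ⟨mm, hm⟩ := hl₁m
      obtain ⟨nn, hn⟩ := hl₂m
      have hgne : g ≠ 0 := by
        intro h0
        apply hl₂ne
        rw [← hn, h0]
        simp
      have hnne : (nn : ℝ) ≠ 0 := by
        intro h0
        apply hl₂ne
        rw [← hn, zsmul_eq_mul, h0, zero_mul]
      apply hirr
      refine ⟨(mm : ℚ) / (nn : ℚ), ?_⟩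
      rw [← hm, ← hn, zsmul_eq_mul, zsmul_eq_mul]
      push_cast
      rw [mul_div_mul_right _ _ hgne]
  set S : Set ℝ := {t : ℝ | f (p.1, t) = f q} with hSdef
  have hclosedS : IsClosed S :=
    isClosed_eq (hf.continuous.comp (continuous_const.prodMk continuous_id)) continuous_const
  have hdenseS : Dense S := by
    rw [dense_iff_exists_between]
    intro α β hαβ
    have hψanti := HS.psi_strictAnti h₁ h₂ hclosed hpos₂ p.1
    have hlt : HS.phi lam₁ lam₂ (p.1, β) < HS.phi lam₁ lam₂ (p.1, α) := hψanti hαβ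
    obtain ⟨g, hgL, hg1, hg2⟩ := dense_iff_exists_between.1 hdense
      (HS.phi lam₁ lam₂ (p.1, β) - HS.phi lam₁ lam₂ q)
      (HS.phi lam₁ lam₂ (p.1, α) - HS.phi lam₁ lam₂ q) (by linarith)
    obtain ⟨mm, nn, hmn⟩ := AddSubgroup.mem_closure_pair.1 hgL
    have hψcont : Continuous (fun t => HS.phi lam₁ lam₂ (p.1, t)) :=
      continuous_iff_continuousAt.2 fun t =>
        (HS.hasDerivAt_phi_snd h₁ h₂ hclosed p.1 t).continuousAt
    have hc : HS.phi lam₁ lam₂ q + g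
        ∈ Set.Ioo (HS.phi lam₁ lam₂ (p.1, β)) (HS.phi lam₁ lam₂ (p.1, α)) :=
      ⟨by linarith, by linarith⟩
    obtain ⟨t, htIoo, htval⟩ := intermediate_value_Ioo' (le_of_lt hαβ) hψcont.continuousOn hc
    refine ⟨t, ?_, htIoo.1, htIoo.2⟩
    show f (p.1, t) = f q
    have htrans : HS.phi lam₁ lam₂ (q.1 + (mm : ℝ), q.2 + ((-nn : ℤ) : ℝ))
        = HS.phi lam₁ lam₂ q + mm * l₁ + nn * l₂ := by
      have h := HS.phi_Pm h₁ h₂ hclosed hper₁ hper₂ hl₁' hl₂' mm (-nn) q.1 q.2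
      push_cast at h ⊢
      rw [h]
      ring
    have hval : HS.phi lam₁ lam₂ (p.1, t)
        = HS.phi lam₁ lam₂ (q.1 + (mm : ℝ), q.2 + ((-nn : ℤ) : ℝ)) := by
      rw [htrans]
      have hgval : (mm : ℝ) * l₁ + (nn : ℝ) * l₂ = g := by
        rw [← hmn, zsmul_eq_mul, zsmul_eq_mul]
      rw [show HS.phi lam₁ lam₂ q + ↑mm * l₁ + ↑nn * l₂
        = HS.phi lam₁ lam₂ q + (↑mm * l₁ + ↑nn * l₂) by ring, hgval]
      exact htval
    have hleaf := leaf (p.1, t) (q.1 + (mm : ℝ), q.2 + ((-nn : ℤ) : ℝ)) hval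
    rw [hleaf]
    have hper := hfper q (mm, -nn)
    simpa using hper
  have hp2 : p.2 ∈ S := by
    rw [← hclosedS.closure_eq, hdenseS.closure_eq]
    trivial
  exact hp2
end
end
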